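/- Let $a<b$ be real, let $T_0:[a,b]\to M_n(\mathbb{C})$ be continuously differentiable and $T_1,T_2,T_3:[a,b]\to M_n(\mathbb{C})$ be continuous, all skew-hermitian valued, let $c,x_1,x_2,x_3\in\mathbb{R}$, and set $\gamma = T_0 - ic$. Then for every pair $u_a,u_b\in\mathbb{C}^n$ there exists a unique twice continuously differentiable $v:[a,b]\to\mathbb{C}^n$ satisfying $(v'+\gamma v)' + \gamma(v'+\gamma v) + \sum_{j=1}^3 (T_j - ix_j)^2 v = 0$ on $[a,b]$ with boundary values $v(a)=u_a$ and $v(b)=u_b$. -/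

import Mathlib

/-!
Uniqueness: if `v` solves the equation with zero boundary values, then since `γ`, `T₀'` and
`Tⱼ - i xⱼ` are skew-hermitian, `(|v|²)'' = 2 (|v' + γ v|² + Σⱼ |(Tⱼ - i xⱼ) v|²) ≥ 0`; so `|v|²` is
convex, vanishes at `a` and `b`, and hence vanishes on `[a, b]`.

Existence: with `w = v' + γ v` the equation becomes a linear first-order system for `(v, w)`,
solvable on `[a, b]` for every initial value (Picard–Lindelöf on short intervals, glued together).
The map `(v(a), w(a)) ↦ (v(a), v(b))` is then a linear endomorphism of `ℂⁿ × ℂⁿ`, injective by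
uniqueness, hence surjective.
-/

open Matrix Set

/-- `(v, v', v'')` is a twice continuously differentiable solution on `[a, b]` of the
boundary-value problem `(v' + γv)' + γ(v' + γv) + Σⱼ (Tⱼ - ixⱼ)² v = 0`,
`v(a) = uₐ`, `v(b) = u_b`, where `γ = T0 - ic`. -/
def IsDirichletNahmSol {n : ℕ} (a b : ℝ)
    (T0 T0' T1 T2 T3 : ℝ → Matrix (Fin n) (Fin n) ℂ)
    (c x1 x2 x3 : ℝ) (ua ub : Fin n → ℂ)
    (v v' v'' : ℝ → Fin n → ℂ) : Prop :=
  (∀ z ∈ Icc a b, ∀ i, HasDerivWithinAt (fun t => v t i) (v' z i) (Icc a b) z) ∧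
  (∀ z ∈ Icc a b, ∀ i, HasDerivWithinAt (fun t => v' t i) (v'' z i) (Icc a b) z) ∧
  (∀ i, ContinuousOn (fun z => v'' z i) (Icc a b)) ∧
  (∀ z ∈ Icc a b,
      (v'' z + (T0' z).mulVec (v z)
          + (T0 z - (Complex.I * ((c : ℝ) : ℂ))
              • (1 : Matrix (Fin n) (Fin n) ℂ)).mulVec (v' z))
        + (T0 z - (Complex.I * ((c : ℝ) : ℂ))
              • (1 : Matrix (Fin n) (Fin n) ℂ)).mulVec
            (v' z + (T0 z - (Complex.I * ((c : ℝ) : ℂ))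
              • (1 : Matrix (Fin n) (Fin n) ℂ)).mulVec (v z))
        + ((T1 z - (Complex.I * ((x1 : ℝ) : ℂ)) • (1 : Matrix (Fin n) (Fin n) ℂ))
            * (T1 z - (Complex.I * ((x1 : ℝ) : ℂ)) • (1 : Matrix (Fin n) (Fin n) ℂ))).mulVec (v z)
        + ((T2 z - (Complex.I * ((x2 : ℝ) : ℂ)) • (1 : Matrix (Fin n) (Fin n) ℂ))
            * (T2 z - (Complex.I * ((x2 : ℝ) : ℂ)) • (1 : Matrix (Fin n) (Fin n) ℂ))).mulVec (v z)
        + ((T3 z - (Complex.I * ((x3 : ℝ) : ℂ)) • (1 : Matrix (Fin n) (Fin n) ℂ))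
            * (T3 z - (Complex.I * ((x3 : ℝ) : ℂ)) • (1 : Matrix (Fin n) (Fin n) ℂ))).mulVec (v z)
        = 0) ∧
  v a = ua ∧ v b = ub

open scoped NNReal ComplexOrder

section LipschitzODE

variable {E : Type*} [NormedAddCommGroup E] [NormedSpace ℝ E]

theorem hasDerivWithinAt_Icc_piecewise {f g f' : ℝ → E} {a m b t : ℝ} (ham : a ≤ m) (hmb : m ≤ b)
    (hf : ∀ t ∈ Icc a m, HasDerivWithinAt f (f' t) (Icc a m) t)
    (hg : ∀ t ∈ Icc m b, HasDerivWithinAt g (f' t) (Icc m b) t) (hfg : f m = g m) :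
    HasDerivWithinAt (fun s ↦ if s ≤ m then f s else g s) (f' t) (Icc a b) t := by
  have hleft : EqOn (fun s ↦ if s ≤ m then f s else g s) f (Icc a m) := fun s hs ↦ if_pos hs.2
  have hright : EqOn (fun s ↦ if s ≤ m then f s else g s) g (Icc m b) := fun s hs ↦ by
    rcases hs.1.eq_or_lt with rfl | hms
    · simp [hfg]
    · simp [not_le.2 hms]
  rw [← Icc_union_Icc_eq_Icc ham hmb]
  refine HasDerivWithinAt.union ?_ ?_
  · by_cases ht : t ∈ Icc a m
    · exact (hf t ht).congr hleft (hleft ht)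
    · exact HasFDerivWithinAt.of_notMem_closure (by rwa [closure_Icc])
  · by_cases ht : t ∈ Icc m b
    · exact (hg t ht).congr hright (hright ht)
    · exact HasFDerivWithinAt.of_notMem_closure (by rwa [closure_Icc])

theorem eqOn_Icc_of_hasDerivWithinAt_of_lipschitzWith {F : ℝ → E → E} {K : ℝ≥0} {a b : ℝ}
    (hlip : ∀ t ∈ Icc a b, LipschitzWith K (F t)) {x y : ℝ → E}
    (hx : ∀ t ∈ Icc a b, HasDerivWithinAt x (F t (x t)) (Icc a b) t)
    (hy : ∀ t ∈ Icc a b, HasDerivWithinAt y (F t (y t)) (Icc a b) t) (ha : x a = y a) :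
    EqOn x y (Icc a b) := by
  have hright {z : ℝ → E} (hz : ∀ t ∈ Icc a b, HasDerivWithinAt z (F t (z t)) (Icc a b) t)
      (t : ℝ) (ht : t ∈ Ico a b) : HasDerivWithinAt z (F t (z t)) (Ici t) t :=
    (hz t (Ico_subset_Icc_self ht)).mono_of_mem_nhdsWithin <|
      Filter.mem_of_superset (inter_mem_nhdsWithin _ (Iio_mem_nhds ht.2))
        fun s hs ↦ ⟨ht.1.trans hs.1, hs.2.le⟩
  exact ODE_solution_unique_of_mem_Icc_right (s := fun _ ↦ univ)
    (fun t ht ↦ (hlip t (Ico_subset_Icc_self ht)).lipschitzOnWith)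
    (fun t ht ↦ (hx t ht).continuousWithinAt) (hright hx) (fun _ _ ↦ mem_univ _)
    (fun t ht ↦ (hy t ht).continuousWithinAt) (hright hy) (fun _ _ ↦ mem_univ _) ha

variable [CompleteSpace E]

theorem exists_hasDerivWithinAt_Icc_of_lipschitzWith_of_mul_le {F : ℝ → E → E} {K : ℝ≥0} {t₀ t₁ : ℝ}
    (hlip : ∀ t ∈ Icc t₀ t₁, LipschitzWith K (F t)) (hcont : ∀ x, ContinuousOn (F · x) (Icc t₀ t₁))
    (h01 : t₀ ≤ t₁) (hstep : K * (t₁ - t₀) ≤ 1 / 2) (x₀ : E) :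
    ∃ x : ℝ → E, x t₀ = x₀ ∧ ∀ t ∈ Icc t₀ t₁, HasDerivWithinAt x (F t (x t)) (Icc t₀ t₁) t := by
  obtain ⟨M, hM⟩ := isCompact_Icc.exists_bound_of_continuousOn (hcont x₀)
  have hM0 : 0 ≤ M := (norm_nonneg _).trans (hM t₀ ⟨le_rfl, h01⟩)
  -- on the ball of radius `R` the field is bounded by `M + K R`, and `(M + K R) (t₁ - t₀) ≤ R`
  set R : ℝ≥0 := ⟨2 * M * (t₁ - t₀), by have := sub_nonneg.2 h01; positivity⟩
  have hpl : IsPicardLindelof F (⟨t₀, le_rfl, h01⟩ : Icc t₀ t₁) x₀ R 0 (⟨M, hM0⟩ + K * R) K :=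
    { lipschitzOnWith := fun t ht ↦ (hlip t ht).lipschitzOnWith
      continuousOn := fun x _ ↦ hcont x
      norm_le := fun t ht x hx ↦ by
        have hF := (hlip t ht).dist_le_mul x x₀
        rw [dist_eq_norm, dist_eq_norm] at hF
        have hxR : ‖x - x₀‖ ≤ R := mem_closedBall_iff_norm.1 hx
        calc ‖F t x‖ ≤ ‖F t x₀‖ + ‖F t x - F t x₀‖ := norm_le_insert' _ _
          _ ≤ M + K * R := add_le_add (hM t ht) (hF.trans (by gcongr))
      mul_max_le := by
        show (M + K * (2 * M * (t₁ - t₀))) * max (t₁ - t₀) (t₀ - t₀) ≤ 2 * M * (t₁ - t₀) - 0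
        rw [sub_self, max_eq_left (sub_nonneg.2 h01)]
        have hR : 0 ≤ 2 * M * (t₁ - t₀) := (R : ℝ≥0).2
        nlinarith [mul_le_mul_of_nonneg_left hstep hR] }
  exact hpl.exists_eq_forall_mem_Icc_hasDerivWithinAt₀

theorem exists_hasDerivWithinAt_Icc_of_sub_le_mul {F : ℝ → E → E} {K : ℝ≥0} {a b δ : ℝ}
    (hlip : ∀ t ∈ Icc a b, LipschitzWith K (F t)) (hcont : ∀ x, ContinuousOn (F · x) (Icc a b))
    (hδ : 0 ≤ δ) (hKδ : K * δ ≤ 1 / 2) (m : ℕ) {t₀ : ℝ} (ht₀ : t₀ ∈ Icc a b)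
    (hm : b - t₀ ≤ m * δ) (x₀ : E) :
    ∃ x : ℝ → E, x t₀ = x₀ ∧ ∀ t ∈ Icc t₀ b, HasDerivWithinAt x (F t (x t)) (Icc t₀ b) t := by
  induction m generalizing t₀ x₀ with
  | zero =>
    obtain rfl : t₀ = b := le_antisymm ht₀.2 (by simpa using hm)
    exact ⟨fun _ ↦ x₀, rfl, fun t _ ↦ HasFDerivWithinAt.of_subsingleton (by simp)⟩
  | succ m ih =>
    set t₁ := min (t₀ + δ) b
    have h01 : t₀ ≤ t₁ := le_min (by linarith) ht₀.2
    have h1b : t₁ ≤ b := min_le_right _ _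
    have hsub : Icc t₀ t₁ ⊆ Icc a b := Icc_subset_Icc ht₀.1 h1b
    have hstep : K * (t₁ - t₀) ≤ 1 / 2 :=
      le_trans (by gcongr; linarith [min_le_left (t₀ + δ) b]) hKδ
    obtain ⟨x, hx₀, hx⟩ := exists_hasDerivWithinAt_Icc_of_lipschitzWith_of_mul_le
      (fun t ht ↦ hlip t (hsub ht)) (fun x ↦ (hcont x).mono hsub) h01 hstep x₀
    have hrest : b - t₁ ≤ m * δ := by
      rcases min_cases (t₀ + δ) b with ⟨h, _⟩ | ⟨h, _⟩ <;> rw [show t₁ = _ from h]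
      · push_cast at hm; linarith
      · simp only [sub_self]; positivity
    obtain ⟨y, hy₁, hy⟩ := ih ⟨ht₀.1.trans h01, h1b⟩ hrest (x t₁)
    refine ⟨fun s ↦ if s ≤ t₁ then x s else y s, by simp [h01, hx₀], fun t _ ↦
      hasDerivWithinAt_Icc_piecewise (f' := fun s ↦ F s (if s ≤ t₁ then x s else y s))
        h01 h1b (fun t ht ↦ ?_) (fun t ht ↦ ?_) hy₁.symm⟩
    · simpa [ht.2] using hx t ht
    · rcases ht.1.eq_or_lt with rfl | ht₁
      · simpa [hy₁] using hy _ ht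
      · simpa [not_le.2 ht₁] using hy t ht

theorem exists_hasDerivWithinAt_Icc_of_lipschitzWith {F : ℝ → E → E} {K : ℝ≥0} {a b : ℝ}
    (hlip : ∀ t ∈ Icc a b, LipschitzWith K (F t)) (hcont : ∀ x, ContinuousOn (F · x) (Icc a b))
    (hab : a ≤ b) (x₀ : E) :
    ∃ x : ℝ → E, x a = x₀ ∧ ∀ t ∈ Icc a b, HasDerivWithinAt x (F t (x t)) (Icc a b) t := by
  set δ : ℝ := 1 / (2 * (K + 1))
  have hδ : 0 < δ := by positivity
  have hKδ : K * δ ≤ 1 / 2 := by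
    rw [mul_one_div, div_le_div_iff₀ (by positivity) two_pos]
    linarith
  refine exists_hasDerivWithinAt_Icc_of_sub_le_mul hlip hcont hδ.le hKδ ⌈(b - a) / δ⌉₊
    ⟨le_rfl, hab⟩ ?_ x₀
  rw [← div_le_iff₀ hδ]
  exact Nat.le_ceil _

end LipschitzODE

section LinearODE

variable {E : Type*} [NormedAddCommGroup E] [NormedSpace ℝ E] {A : ℝ → E →L[ℝ] E} {a b : ℝ}

theorem exists_lipschitzWith_of_continuousOn_Icc (hA : ContinuousOn A (Icc a b)) :
    ∃ K : ℝ≥0, ∀ t ∈ Icc a b, LipschitzWith K (A t) := by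
  obtain ⟨K, hK⟩ := isCompact_Icc.exists_bound_of_continuousOn hA
  exact ⟨K.toNNReal, fun t ht ↦
    (A t).lipschitz.weaken (NNReal.coe_le_coe.1 ((hK t ht).trans (Real.le_coe_toNNReal K)))⟩

variable [CompleteSpace E]

theorem exists_linearMap_forall_exists_hasDerivWithinAt_Icc (hA : ContinuousOn A (Icc a b))
    (hab : a ≤ b) : ∃ Φ : E →ₗ[ℝ] E, ∀ x₀, ∃ x : ℝ → E, x a = x₀ ∧ x b = Φ x₀ ∧
      ∀ t ∈ Icc a b, HasDerivWithinAt x (A t (x t)) (Icc a b) t := by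
  obtain ⟨K, hK⟩ := exists_lipschitzWith_of_continuousOn_Icc hA
  choose x hxa hx using exists_hasDerivWithinAt_Icc_of_lipschitzWith hK
    (fun y ↦ hA.clm_apply continuousOn_const) hab
  have huniq (y : ℝ → E) (hy : ∀ t ∈ Icc a b, HasDerivWithinAt y (A t (y t)) (Icc a b) t)
      (x₀ : E) (hya : y a = x₀) : y b = x x₀ b :=
    eqOn_Icc_of_hasDerivWithinAt_of_lipschitzWith hK hy (hx x₀) (by rw [hya, hxa])
      ⟨hab, le_rfl⟩
  refine ⟨{ toFun := fun x₀ ↦ x x₀ b, map_add' := fun x₀ x₁ ↦ ?_, map_smul' := fun r x₀ ↦ ?_ },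
    fun x₀ ↦ ⟨x x₀, hxa x₀, rfl, hx x₀⟩⟩
  · refine (huniq (x x₀ + x x₁) (fun t ht ↦ ?_) _ (by simp [hxa])).symm
    simpa using (hx x₀ t ht).add (hx x₁ t ht)
  · refine (huniq (r • x x₀) (fun t ht ↦ ?_) _ (by simp [hxa])).symm
    simpa using (hx x₀ t ht).const_smul r

end LinearODE

section StarDotProduct

variable {ι : Type*} [Fintype ι]

theorem re_star_dotProduct_comm (x y : ι → ℂ) : (star x ⬝ᵥ y).re = (star y ⬝ᵥ x).re := by
  rw [star_dotProduct, Complex.star_def, Complex.conj_re]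

theorem re_star_dotProduct_self_nonneg (x : ι → ℂ) : 0 ≤ (star x ⬝ᵥ x).re :=
  (Complex.nonneg_iff.1 (dotProduct_star_self_nonneg x)).1

theorem eq_zero_of_re_star_dotProduct_self_nonpos {x : ι → ℂ} (h : (star x ⬝ᵥ x).re ≤ 0) :
    x = 0 :=
  dotProduct_star_self_eq_zero.1 <| le_antisymm
    (Complex.le_def.2 ⟨h, (Complex.nonneg_iff.1 (dotProduct_star_self_nonneg x)).2.symm⟩)
    (dotProduct_star_self_nonneg x)

theorem star_dotProduct_mulVec_of_conjTranspose_eq_neg {M : Matrix ι ι ℂ} (hM : Mᴴ = -M)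
    (x y : ι → ℂ) : star x ⬝ᵥ (M *ᵥ y) = -(star (M *ᵥ x) ⬝ᵥ y) := by
  rw [star_mulVec, hM, vecMul_neg, neg_dotProduct, neg_neg, dotProduct_mulVec]

theorem re_star_dotProduct_mulVec_self_of_conjTranspose_eq_neg {M : Matrix ι ι ℂ}
    (hM : Mᴴ = -M) (x : ι → ℂ) : (star x ⬝ᵥ (M *ᵥ x)).re = 0 := by
  have h := congrArg Complex.re (star_dotProduct_mulVec_of_conjTranspose_eq_neg hM x x)
  rw [Complex.neg_re, re_star_dotProduct_comm (M *ᵥ x)] at h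
  linarith

theorem re_star_dotProduct_mul_self_mulVec_nonpos {M : Matrix ι ι ℂ} (hM : Mᴴ = -M)
    (x : ι → ℂ) : (star x ⬝ᵥ ((M * M) *ᵥ x)).re ≤ 0 := by
  rw [← mulVec_mulVec, star_dotProduct_mulVec_of_conjTranspose_eq_neg hM, Complex.neg_re,
    neg_nonpos]
  exact re_star_dotProduct_self_nonneg _

/-- With `w = v' + γ v`, the left side equals `|w|² - Re⟪v, S v⟫`. -/
theorem re_star_dotProduct_add_nonneg_of_add_mulVec_eq_zero {γ B S : Matrix ι ι ℂ}
    {v v' v'' : ι → ℂ} (hγ : γᴴ = -γ) (hB : Bᴴ = -B) (hS : (star v ⬝ᵥ (S *ᵥ v)).re ≤ 0)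
    (h : v'' + B *ᵥ v + γ *ᵥ v' + γ *ᵥ (v' + γ *ᵥ v) + S *ᵥ v = 0) :
    0 ≤ (star v ⬝ᵥ v'').re + (star v' ⬝ᵥ v').re := by
  have h0 := congrArg (fun w ↦ (star v ⬝ᵥ w).re) h
  simp only [dotProduct_add, mulVec_add, Complex.add_re, dotProduct_zero, Complex.zero_re,
    star_dotProduct_mulVec_of_conjTranspose_eq_neg hγ v, Complex.neg_re,
    re_star_dotProduct_mulVec_self_of_conjTranspose_eq_neg hB] at h0
  have hw := re_star_dotProduct_self_nonneg (v' + γ *ᵥ v)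
  simp only [star_add, dotProduct_add, add_dotProduct, Complex.add_re] at hw
  linarith [re_star_dotProduct_comm v' (γ *ᵥ v)]

end StarDotProduct

section Calculus

variable {ι : Type*} {s : Set ℝ} {t : ℝ}

theorem conjTranspose_eq_neg_of_hasDerivWithinAt {a b : ℝ} (hab : a < b)
    {M M' : ℝ → Matrix ι ι ℂ}
    (hM : ∀ t ∈ Icc a b, ∀ i j, HasDerivWithinAt (fun t ↦ M t i j) (M' t i j) (Icc a b) t)
    (hskew : ∀ t ∈ Icc a b, (M t)ᴴ = -M t) {t : ℝ} (ht : t ∈ Icc a b) : (M' t)ᴴ = -M' t := by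
  ext i j
  have hstar : EqOn (fun t ↦ star (M t j i)) (fun t ↦ -M t i j) (Icc a b) := fun t ht ↦
    congrFun (congrFun (hskew t ht) i) j
  exact (uniqueDiffOn_Icc hab t ht).eq_deriv _ (hM t ht j i).star
    ((hM t ht i j).fun_neg.congr hstar (hstar ht))

variable [Fintype ι]

theorem HasDerivWithinAt.re_star_dotProduct {v w : ℝ → ι → ℂ} {v' w' : ι → ℂ}
    (hv : HasDerivWithinAt v v' s t) (hw : HasDerivWithinAt w w' s t) :
    HasDerivWithinAt (fun t ↦ (star (v t) ⬝ᵥ w t).re)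
      ((star v' ⬝ᵥ w t).re + (star (v t) ⬝ᵥ w').re) s t := by
  have h : HasDerivWithinAt (fun t ↦ star (v t) ⬝ᵥ w t)
      (star v' ⬝ᵥ w t + star (v t) ⬝ᵥ w') s t := by
    simp only [dotProduct, Pi.star_apply, ← Finset.sum_add_distrib]
    exact HasDerivWithinAt.fun_sum fun i _ ↦
      (hasDerivWithinAt_pi.1 hv.star i).mul (hasDerivWithinAt_pi.1 hw i)
  exact (Complex.reCLM.hasFDerivAt.comp_hasDerivWithinAt t h :)

theorem HasDerivWithinAt.matrix_mulVec {M : ℝ → Matrix ι ι ℂ} {M' : Matrix ι ι ℂ}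
    {y : ℝ → ι → ℂ} {y' : ι → ℂ} (hM : ∀ i j, HasDerivWithinAt (fun t ↦ M t i j) (M' i j) s t)
    (hy : HasDerivWithinAt y y' s t) :
    HasDerivWithinAt (fun t ↦ M t *ᵥ y t) (M' *ᵥ y t + M t *ᵥ y') s t := by
  refine hasDerivWithinAt_pi.2 fun i ↦ ?_
  simp only [mulVec, dotProduct, Pi.add_apply, ← Finset.sum_add_distrib]
  exact HasDerivWithinAt.fun_sum fun j _ ↦ (hM i j).mul (hasDerivWithinAt_pi.1 hy j)

theorem eqOn_zero_of_re_star_dotProduct_add_nonneg {a b : ℝ} {v v' v'' : ℝ → ι → ℂ}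
    (hv : ∀ t ∈ Icc a b, HasDerivWithinAt v (v' t) (Icc a b) t)
    (hv' : ∀ t ∈ Icc a b, HasDerivWithinAt v' (v'' t) (Icc a b) t)
    (h : ∀ t ∈ Icc a b, 0 ≤ (star (v t) ⬝ᵥ v'' t).re + (star (v' t) ⬝ᵥ v' t).re)
    (ha : v a = 0) (hb : v b = 0) : EqOn v 0 (Icc a b) := by
  have hf (t) (ht : t ∈ Icc a b) := (hv t ht).re_star_dotProduct (hv t ht)
  have hf' (t) (ht : t ∈ Icc a b) :=
    ((hv' t ht).re_star_dotProduct (hv t ht)).add ((hv t ht).re_star_dotProduct (hv' t ht))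
  have hconv : ConvexOn ℝ (Icc a b) fun t ↦ (star (v t) ⬝ᵥ v t).re := by
    refine convexOn_of_hasDerivWithinAt2_nonneg (convex_Icc a b)
      (f' := fun t ↦ (star (v' t) ⬝ᵥ v t).re + (star (v t) ⬝ᵥ v' t).re)
      (f'' := fun t ↦ (star (v'' t) ⬝ᵥ v t).re + (star (v' t) ⬝ᵥ v' t).re +
        ((star (v' t) ⬝ᵥ v' t).re + (star (v t) ⬝ᵥ v'' t).re))
      (fun t ht ↦ (hf t ht).continuousWithinAt) (fun t ht ↦ ?_) (fun t ht ↦ ?_) fun t ht ↦ ?_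
    · exact (hf t (interior_subset ht)).mono interior_subset
    · exact (hf' t (interior_subset ht)).mono interior_subset
    · have := h t (interior_subset ht)
      rw [re_star_dotProduct_comm (v'' t)]
      linarith
  intro t ht
  have hle := hconv.le_max_of_mem_Icc (left_mem_Icc.2 (ht.1.trans ht.2))
    (right_mem_Icc.2 (ht.1.trans ht.2)) ht
  simp only [ha, hb, star_zero, dotProduct_zero, Complex.zero_re, max_self] at hle
  exact eq_zero_of_re_star_dotProduct_self_nonpos hle

end Calculus

theorem continuousOn_matrix {X R m n : Type*} [TopologicalSpace X] [TopologicalSpace R]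
    {M : X → Matrix m n R} {s : Set X} (h : ∀ i j, ContinuousOn (fun x ↦ M x i j) s) :
    ContinuousOn M s :=
  continuousOn_pi.2 fun i ↦ continuousOn_pi.2 fun j ↦ h i j

section FirstOrderSystem

variable {ι : Type*} [Fintype ι]

/-- With `w = v' + γ v`, the equation `(v' + γ v)' + γ (v' + γ v) + S v = 0` becomes the
first-order system `(v, w)' = (w - γ v, -γ w - S v)`. -/
noncomputable def firstOrderSystem (γ S : Matrix ι ι ℂ) :
    ((ι → ℂ) × (ι → ℂ)) →L[ℝ] ((ι → ℂ) × (ι → ℂ)) :=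
  LinearMap.toContinuousLinearMap
    { toFun := fun x ↦ (x.2 - γ *ᵥ x.1, -(γ *ᵥ x.2) - S *ᵥ x.1)
      map_add' := fun x y ↦ by ext <;> simp only [Prod.fst_add, Prod.snd_add, mulVec_add,
        Pi.add_apply, Pi.sub_apply, Pi.neg_apply] <;> abel
      map_smul' := fun r x ↦ by ext <;> simp [mulVec_smul, smul_sub] }

@[simp]
theorem firstOrderSystem_apply (γ S : Matrix ι ι ℂ) (x : (ι → ℂ) × (ι → ℂ)) :
    firstOrderSystem γ S x = (x.2 - γ *ᵥ x.1, -(γ *ᵥ x.2) - S *ᵥ x.1) :=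
  rfl

theorem ContinuousOn.firstOrderSystem {γ S : ℝ → Matrix ι ι ℂ} {s : Set ℝ}
    (hγ : ContinuousOn γ s) (hS : ContinuousOn S s) :
    ContinuousOn (fun t ↦ firstOrderSystem (γ t) (S t)) s :=
  continuousOn_clm_apply.2 fun x ↦ by simp only [firstOrderSystem_apply]; fun_prop

end FirstOrderSystem

section SubIScalar

variable {ι : Type*} [DecidableEq ι]

/-- `T - i c`: the matrices `γ = T₀ - i c` and `Tⱼ - i xⱼ` of the equation. -/
noncomputable def subIScalar (T : Matrix ι ι ℂ) (c : ℝ) : Matrix ι ι ℂ :=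
  T - (Complex.I * c) • 1

theorem conjTranspose_subIScalar {T : Matrix ι ι ℂ} (hT : Tᴴ = -T) (c : ℝ) :
    (subIScalar T c)ᴴ = -subIScalar T c := by
  simp only [subIScalar, conjTranspose_sub, hT, conjTranspose_smul, star_mul', RCLike.star_def,
    Complex.conj_I, Complex.conj_ofReal, neg_mul, conjTranspose_one, neg_smul, sub_neg_eq_add,
    neg_sub]
  abel

variable [Fintype ι]

noncomputable def sumSqSubIScalar (T₁ T₂ T₃ : Matrix ι ι ℂ) (x₁ x₂ x₃ : ℝ) : Matrix ι ι ℂ :=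
  subIScalar T₁ x₁ * subIScalar T₁ x₁ + subIScalar T₂ x₂ * subIScalar T₂ x₂ +
    subIScalar T₃ x₃ * subIScalar T₃ x₃

theorem re_star_dotProduct_sumSqSubIScalar_mulVec_nonpos {T₁ T₂ T₃ : Matrix ι ι ℂ}
    (h₁ : T₁ᴴ = -T₁) (h₂ : T₂ᴴ = -T₂) (h₃ : T₃ᴴ = -T₃) (x₁ x₂ x₃ : ℝ) (v : ι → ℂ) :
    (star v ⬝ᵥ (sumSqSubIScalar T₁ T₂ T₃ x₁ x₂ x₃ *ᵥ v)).re ≤ 0 := by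
  simp only [sumSqSubIScalar, add_mulVec, dotProduct_add, Complex.add_re]
  linarith [re_star_dotProduct_mul_self_mulVec_nonpos (conjTranspose_subIScalar h₁ x₁) v,
    re_star_dotProduct_mul_self_mulVec_nonpos (conjTranspose_subIScalar h₂ x₂) v,
    re_star_dotProduct_mul_self_mulVec_nonpos (conjTranspose_subIScalar h₃ x₃) v]

end SubIScalar

namespace IsDirichletNahmSol

variable {n : ℕ} {a b : ℝ} {T0 T0' T1 T2 T3 : ℝ → Matrix (Fin n) (Fin n) ℂ} {c x1 x2 x3 : ℝ}
  {ua ub : Fin n → ℂ} {v v' v'' w w' w'' : ℝ → Fin n → ℂ}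

theorem add_mulVec_eq_zero
    (h : IsDirichletNahmSol a b T0 T0' T1 T2 T3 c x1 x2 x3 ua ub v v' v'') {t : ℝ}
    (ht : t ∈ Icc a b) :
    v'' t + T0' t *ᵥ v t + subIScalar (T0 t) c *ᵥ v' t +
        subIScalar (T0 t) c *ᵥ (v' t + subIScalar (T0 t) c *ᵥ v t) +
        sumSqSubIScalar (T1 t) (T2 t) (T3 t) x1 x2 x3 *ᵥ v t = 0 := by
  simpa only [sumSqSubIScalar, subIScalar, add_mulVec, add_assoc] using h.2.2.2.1 t ht

theorem sub (hv : IsDirichletNahmSol a b T0 T0' T1 T2 T3 c x1 x2 x3 ua ub v v' v'')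
    (hw : IsDirichletNahmSol a b T0 T0' T1 T2 T3 c x1 x2 x3 ua ub w w' w'') :
    IsDirichletNahmSol a b T0 T0' T1 T2 T3 c x1 x2 x3 0 0 (v - w) (v' - w') (v'' - w'') := by
  obtain ⟨hv₁, hv₂, hv₃, hv₄, hva, hvb⟩ := hv
  obtain ⟨hw₁, hw₂, hw₃, hw₄, hwa, hwb⟩ := hw
  refine ⟨fun t ht i ↦ (hv₁ t ht i).sub (hw₁ t ht i), fun t ht i ↦ (hv₂ t ht i).sub (hw₂ t ht i),
    fun i ↦ (hv₃ i).sub (hw₃ i), fun t ht ↦ ?_, by simp [hva, hwa], by simp [hvb, hwb]⟩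
  have hv := hv₄ t ht
  have hw := hw₄ t ht
  simp only [Pi.sub_apply, mulVec_sub, mulVec_add] at hv hw ⊢
  linear_combination (norm := module) hv - hw

theorem eqOn_zero (hab : a < b)
    (hT0 : ∀ z ∈ Icc a b, ∀ i j,
        HasDerivWithinAt (fun t => T0 t i j) (T0' z i j) (Icc a b) z)
    (hskew : ∀ z ∈ Icc a b,
        (T0 z)ᴴ = -T0 z ∧ (T1 z)ᴴ = -T1 z ∧ (T2 z)ᴴ = -T2 z ∧ (T3 z)ᴴ = -T3 z)
    (h : IsDirichletNahmSol a b T0 T0' T1 T2 T3 c x1 x2 x3 0 0 v v' v'') :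
    EqOn v 0 (Icc a b) := by
  refine eqOn_zero_of_re_star_dotProduct_add_nonneg (fun t ht ↦ hasDerivWithinAt_pi.2 (h.1 t ht))
    (fun t ht ↦ hasDerivWithinAt_pi.2 (h.2.1 t ht)) (fun t ht ↦ ?_) h.2.2.2.2.1 h.2.2.2.2.2
  obtain ⟨h0, h1, h2, h3⟩ := hskew t ht
  exact re_star_dotProduct_add_nonneg_of_add_mulVec_eq_zero (conjTranspose_subIScalar h0 c)
    (conjTranspose_eq_neg_of_hasDerivWithinAt hab hT0 (fun t ht ↦ (hskew t ht).1) ht)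
    (re_star_dotProduct_sumSqSubIScalar_mulVec_nonpos h1 h2 h3 x1 x2 x3 (v t))
    (h.add_mulVec_eq_zero ht)

theorem eqOn (hw : IsDirichletNahmSol a b T0 T0' T1 T2 T3 c x1 x2 x3 ua ub w w' w'')
    (hv : IsDirichletNahmSol a b T0 T0' T1 T2 T3 c x1 x2 x3 ua ub v v' v'') (hab : a < b)
    (hT0 : ∀ z ∈ Icc a b, ∀ i j,
        HasDerivWithinAt (fun t => T0 t i j) (T0' z i j) (Icc a b) z)
    (hskew : ∀ z ∈ Icc a b,
        (T0 z)ᴴ = -T0 z ∧ (T1 z)ᴴ = -T1 z ∧ (T2 z)ᴴ = -T2 z ∧ (T3 z)ᴴ = -T3 z) :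
    EqOn w v (Icc a b) := fun _ ht ↦
  sub_eq_zero.1 ((hw.sub hv).eqOn_zero hab hT0 hskew ht)

end IsDirichletNahmSol

section Existence

variable {n : ℕ} {a b : ℝ} {T0 T0' T1 T2 T3 : ℝ → Matrix (Fin n) (Fin n) ℂ} {c x1 x2 x3 : ℝ}

theorem isDirichletNahmSol_of_hasDerivWithinAt
    (hT0 : ∀ z ∈ Icc a b, ∀ i j,
        HasDerivWithinAt (fun t => T0 t i j) (T0' z i j) (Icc a b) z)
    (hT0' : ∀ i j, ContinuousOn (fun z => T0' z i j) (Icc a b))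
    (hT1 : ∀ i j, ContinuousOn (fun z => T1 z i j) (Icc a b))
    (hT2 : ∀ i j, ContinuousOn (fun z => T2 z i j) (Icc a b))
    (hT3 : ∀ i j, ContinuousOn (fun z => T3 z i j) (Icc a b))
    {x : ℝ → (Fin n → ℂ) × (Fin n → ℂ)}
    (hx : ∀ t ∈ Icc a b, HasDerivWithinAt x (firstOrderSystem (subIScalar (T0 t) c)
      (sumSqSubIScalar (T1 t) (T2 t) (T3 t) x1 x2 x3) (x t)) (Icc a b) t) :
    ∃ v'' : ℝ → Fin n → ℂ, IsDirichletNahmSol a b T0 T0' T1 T2 T3 c x1 x2 x3 (x a).1 (x b).1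
      (fun t ↦ (x t).1) (fun t ↦ (x t).2 - subIScalar (T0 t) c *ᵥ (x t).1) v'' := by
  set γ := fun t ↦ subIScalar (T0 t) c
  set S := fun t ↦ sumSqSubIScalar (T1 t) (T2 t) (T3 t) x1 x2 x3
  have hv (t) (ht : t ∈ Icc a b) : HasDerivWithinAt (fun t ↦ (x t).1)
      ((x t).2 - γ t *ᵥ (x t).1) (Icc a b) t :=
    (hasFDerivAt_fst.comp_hasDerivWithinAt t (hx t ht) :)
  have hw (t) (ht : t ∈ Icc a b) : HasDerivWithinAt (fun t ↦ (x t).2)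
      (-(γ t *ᵥ (x t).2) - S t *ᵥ (x t).1) (Icc a b) t :=
    (hasFDerivAt_snd.comp_hasDerivWithinAt t (hx t ht) :)
  have hγ (t) (ht : t ∈ Icc a b) (i j : Fin n) :
      HasDerivWithinAt (fun t ↦ subIScalar (T0 t) c i j) (T0' t i j) (Icc a b) t :=
    (hT0 t ht i j).sub_const _
  have hxc : ContinuousOn x (Icc a b) := fun t ht ↦ (hx t ht).continuousWithinAt
  have hT0c : ContinuousOn T0 (Icc a b) :=
    continuousOn_matrix fun i j t ht ↦ (hT0 t ht i j).continuousWithinAt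
  have hT0'c := continuousOn_matrix hT0'
  have hT1c := continuousOn_matrix hT1
  have hT2c := continuousOn_matrix hT2
  have hT3c := continuousOn_matrix hT3
  refine ⟨fun t ↦ -(T0' t *ᵥ (x t).1 + γ t *ᵥ ((x t).2 - γ t *ᵥ (x t).1) + γ t *ᵥ (x t).2 +
      S t *ᵥ (x t).1), fun t ht ↦ hasDerivWithinAt_pi.1 (hv t ht), fun t ht ↦ hasDerivWithinAt_pi.1
    (((hw t ht).fun_sub (HasDerivWithinAt.matrix_mulVec (hγ t ht) (hv t ht))).congr_deriv ?_),
    fun i ↦ continuousOn_pi.1 ?_ i, fun t _ ↦ ?_, rfl, rfl⟩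
  · simp only [γ, S]
    abel
  · simp only [γ, S, subIScalar, sumSqSubIScalar]
    fun_prop
  · simp only [γ, S, sub_add_cancel, sumSqSubIScalar, subIScalar, add_mulVec, add_assoc,
      neg_add_cancel]

theorem eq_zero_of_hasDerivWithinAt_firstOrderSystem (hab : a < b)
    (hT0 : ∀ z ∈ Icc a b, ∀ i j,
        HasDerivWithinAt (fun t => T0 t i j) (T0' z i j) (Icc a b) z)
    (hT0' : ∀ i j, ContinuousOn (fun z => T0' z i j) (Icc a b))
    (hT1 : ∀ i j, ContinuousOn (fun z => T1 z i j) (Icc a b))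
    (hT2 : ∀ i j, ContinuousOn (fun z => T2 z i j) (Icc a b))
    (hT3 : ∀ i j, ContinuousOn (fun z => T3 z i j) (Icc a b))
    (hskew : ∀ z ∈ Icc a b,
        (T0 z)ᴴ = -T0 z ∧ (T1 z)ᴴ = -T1 z ∧ (T2 z)ᴴ = -T2 z ∧ (T3 z)ᴴ = -T3 z)
    {x : ℝ → (Fin n → ℂ) × (Fin n → ℂ)}
    (hx : ∀ t ∈ Icc a b, HasDerivWithinAt x (firstOrderSystem (subIScalar (T0 t) c)
      (sumSqSubIScalar (T1 t) (T2 t) (T3 t) x1 x2 x3) (x t)) (Icc a b) t)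
    (ha : (x a).1 = 0) (hb : (x b).1 = 0) : x a = 0 := by
  obtain ⟨v'', h⟩ := isDirichletNahmSol_of_hasDerivWithinAt hT0 hT0' hT1 hT2 hT3 hx
  rw [ha, hb] at h
  have hv := h.eqOn_zero hab hT0 hskew
  have haI : a ∈ Icc a b := left_mem_Icc.2 hab.le
  -- `v ≡ 0` on `[a, b]` forces `w(a) = v'(a) + γ(a) v(a) = 0`
  have hv' := (uniqueDiffOn_Icc hab a haI).eq_deriv _ (hasDerivWithinAt_pi.2 (h.1 a haI))
    ((hasDerivWithinAt_const a (Icc a b) 0).congr hv (hv haI))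
  simp only [ha, mulVec_zero, sub_zero] at hv'
  exact Prod.ext ha hv'

theorem exists_isDirichletNahmSol (hab : a < b)
    (hT0 : ∀ z ∈ Icc a b, ∀ i j,
        HasDerivWithinAt (fun t => T0 t i j) (T0' z i j) (Icc a b) z)
    (hT0' : ∀ i j, ContinuousOn (fun z => T0' z i j) (Icc a b))
    (hT1 : ∀ i j, ContinuousOn (fun z => T1 z i j) (Icc a b))
    (hT2 : ∀ i j, ContinuousOn (fun z => T2 z i j) (Icc a b))
    (hT3 : ∀ i j, ContinuousOn (fun z => T3 z i j) (Icc a b))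
    (hskew : ∀ z ∈ Icc a b,
        (T0 z)ᴴ = -T0 z ∧ (T1 z)ᴴ = -T1 z ∧ (T2 z)ᴴ = -T2 z ∧ (T3 z)ᴴ = -T3 z)
    (ua ub : Fin n → ℂ) :
    ∃ v v' v'' : ℝ → Fin n → ℂ,
      IsDirichletNahmSol a b T0 T0' T1 T2 T3 c x1 x2 x3 ua ub v v' v'' := by
  have hF : ContinuousOn (fun t ↦ firstOrderSystem (subIScalar (T0 t) c)
      (sumSqSubIScalar (T1 t) (T2 t) (T3 t) x1 x2 x3)) (Icc a b) := by
    have hT0c : ContinuousOn T0 (Icc a b) :=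
      continuousOn_matrix fun i j t ht ↦ (hT0 t ht i j).continuousWithinAt
    have hT1c := continuousOn_matrix hT1
    have hT2c := continuousOn_matrix hT2
    have hT3c := continuousOn_matrix hT3
    refine .firstOrderSystem ?_ ?_ <;> simp only [sumSqSubIScalar, subIScalar] <;> fun_prop
  obtain ⟨Φ, hΦ⟩ := exists_linearMap_forall_exists_hasDerivWithinAt_Icc hF hab.le
  have hinj : Function.Injective ((LinearMap.fst ℝ _ _).prod (LinearMap.fst ℝ _ _ ∘ₗ Φ)) := by
    refine (injective_iff_map_eq_zero _).2 fun y hy ↦ ?_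
    obtain ⟨x, hxa, hxb, hx⟩ := hΦ y
    rw [← hxa]
    exact eq_zero_of_hasDerivWithinAt_firstOrderSystem hab hT0 hT0' hT1 hT2 hT3 hskew hx
      (by simpa [hxa] using congrArg Prod.fst hy) (by simpa [hxb] using congrArg Prod.snd hy)
  obtain ⟨y, hy⟩ := LinearMap.injective_iff_surjective.1 hinj (ua, ub)
  obtain ⟨x, hxa, hxb, hx⟩ := hΦ y
  obtain ⟨rfl, rfl⟩ : y.1 = ua ∧ (Φ y).1 = ub := by simpa using hy
  rw [← hxb, ← hxa]
  obtain ⟨v'', h⟩ := isDirichletNahmSol_of_hasDerivWithinAt hT0 hT0' hT1 hT2 hT3 hx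
  exact ⟨_, _, v'', h⟩

end Existence

/-- Existence and uniqueness for the Dirichlet problem of
`D₁*D₁ v = 0` on `[a, b]` with a skew-hermitian `C¹` background. -/
theorem dirichlet_existence_uniqueness {n : ℕ} (a b : ℝ) (hab : a < b)
    (T0 T0' T1 T2 T3 : ℝ → Matrix (Fin n) (Fin n) ℂ)
    (hT0 : ∀ z ∈ Icc a b, ∀ i j,
        HasDerivWithinAt (fun t => T0 t i j) (T0' z i j) (Icc a b) z)
    (hT0' : ∀ i j, ContinuousOn (fun z => T0' z i j) (Icc a b))
    (hT1 : ∀ i j, ContinuousOn (fun z => T1 z i j) (Icc a b))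
    (hT2 : ∀ i j, ContinuousOn (fun z => T2 z i j) (Icc a b))
    (hT3 : ∀ i j, ContinuousOn (fun z => T3 z i j) (Icc a b))
    (hskew : ∀ z ∈ Icc a b,
        (T0 z)ᴴ = -T0 z ∧ (T1 z)ᴴ = -T1 z ∧ (T2 z)ᴴ = -T2 z ∧ (T3 z)ᴴ = -T3 z)
    (c x1 x2 x3 : ℝ) (ua ub : Fin n → ℂ) :
    ∃ v v' v'' : ℝ → Fin n → ℂ,
      IsDirichletNahmSol a b T0 T0' T1 T2 T3 c x1 x2 x3 ua ub v v' v'' ∧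
      ∀ w w' w'' : ℝ → Fin n → ℂ,
        IsDirichletNahmSol a b T0 T0' T1 T2 T3 c x1 x2 x3 ua ub w w' w'' →
        ∀ z ∈ Icc a b, w z = v z := by
  obtain ⟨v, v', v'', hv⟩ := exists_isDirichletNahmSol hab hT0 hT0' hT1 hT2 hT3 hskew ua ub
  exact ⟨v, v', v'', hv, fun w w' w'' hw ↦ hw.eqOn hv hab hT0 hskew⟩
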